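/- arXiv:0706.1942 — 2 statements merged into one kernel-verified Lean document; each statement's English description precedes it below -/
import Mathlib

section
/- Let A be a (not necessarily unital) algebra over a 2-torsion free commutative ring R satisfying property (P). If a ∈ A satisfies ax + xa = 0 for all x ∈ A, then a = 0. -/
/-- **Lemma 2.1 (ii)**: Let `A` be a (not necessarily unital) algebra over a 2-torsion free
commutative ring `R` satisfying property (P): if `x * a * y + y * a * x = 0` for all `x, y`,
then `a = 0`.  If `a ∈ A` satisfies `a * x + x * a = 0` for all `x ∈ A`, then `a = 0`. -/
theorem jordan_tri_stmt1 {R A : Type*} [CommRing R] [NonUnitalRing A]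
    [Module R A] [IsScalarTower R A A] [SMulCommClass R A A]
    (htor : ∀ x : A, x + x = 0 → x = 0)
    (hP : ∀ c : A, (∀ x y : A, x * c * y + y * c * x = 0) → c = 0)
    (a : A) (h : ∀ x : A, a * x + x * a = 0) : a = 0 := by
  have hneg : ∀ x : A, x * a = -(a * x) := fun x =>
    eq_neg_of_add_eq_zero_right (h x)
  have key : ∀ x y : A, x * a * y = 0 := by
    intro x y
    have h1 : x * a * y = -(a * (x * y)) := by
      rw [hneg x, neg_mul, mul_assoc]
    have h2 : x * a * y = a * (x * y) := by
      have hay : a * y = -(y * a) := (neg_eq_iff_eq_neg.mpr (hneg y)).symm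
      rw [mul_assoc, hay, mul_neg, ← mul_assoc, hneg (x * y), neg_neg]
    have hz : a * (x * y) = 0 := htor _ (by rw [← h2]; nth_rewrite 1 [h1]; rw [h2]; exact neg_add_cancel _)
    rw [h2, hz]
  exact hP a (fun x y => by rw [key, key, add_zero])
end

section
/- Let δ be a Jordan derivation of a 2-torsion free ring S into itself. Then for all a, b ∈ S: δ(aba) = δ(a)ba + aδ(b)a + abδ(a). -/
/-- **Lemma 2.2 (ii)** (Herstein): If `δ` is a Jordan derivation of a 2-torsion free ring `S`
into itself, then `δ (aba) = δ(a)ba + aδ(b)a + abδ(a)` for all `a, b ∈ S`. -/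
theorem jordan_tri_stmt3 {S : Type*} [Ring S]
    (htor : ∀ s : S, s + s = 0 → s = 0)
    (δ : S →+ S) (hJ : ∀ a : S, δ (a * a) = δ a * a + a * δ a)
    (a b : S) :
    δ (a * b * a) = δ a * b * a + a * δ b * a + a * b * δ a := by
  have hpol : ∀ x y : S, δ (x*y + y*x) = δ x * y + x * δ y + (δ y * x + y * δ x) := by
    intro x y
    have h := hJ (x+y)
    have hx := hJ x
    have hy := hJ y
    simp only [map_add, add_mul, mul_add] at h
    rw [map_add]
    linear_combination (norm := noncomm_ring) h - hx - hy
  have key : δ (a*b*a) + δ (a*b*a)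
      = (δ a * b * a + a * δ b * a + a * b * δ a) + (δ a * b * a + a * δ b * a + a * b * δ a) := by
    have h1 := hpol a (a*b + b*a)
    have h2 := hpol (a*a) b
    have hab := hpol a b
    have ha := hJ a
    have harg : a*(a*b + b*a) + (a*b + b*a)*a = (a*a*b + b*(a*a)) + (a*b*a + a*b*a) := by
      noncomm_ring
    rw [harg, map_add, h2, map_add, hab, ha] at h1
    linear_combination (norm := noncomm_ring) h1
  have h0 : (δ (a*b*a) - (δ a * b * a + a * δ b * a + a * b * δ a))
      + (δ (a*b*a) - (δ a * b * a + a * δ b * a + a * b * δ a)) = 0 := by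
    linear_combination (norm := noncomm_ring) key
  exact sub_eq_zero.mp (htor _ h0)
end
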